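/- Let X and Y be ℝ^d-valued random variables with E‖X‖ < ∞ and E‖Y‖ < ∞. For unit vectors s, t in ℝ^d, the one-dimensional 1-Wasserstein distances of the projections satisfy |W₁(s·X, s·Y) − W₁(t·X, t·Y)| ≤ ‖t − s‖ · (E‖X‖ + E‖Y‖). -/

import Mathlib

open MeasureTheory ENNReal
open scoped RealInnerProductSpace

/-- 1-Wasserstein distance: infimum over couplings of the expected distance. -/
noncomputable def W1 {B : Type*} [NormedAddCommGroup B] [MeasurableSpace B]
    (μ ν : Measure B) : ℝ≥0∞ :=
  ⨅ (π : Measure (B × B)) (_ : π.map Prod.fst = μ) (_ : π.map Prod.snd = ν),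
    ∫⁻ p, ‖p.1 - p.2‖₊ ∂π

/-! Projecting the same sample along two directions gives a coupling of `s·X` and `t·X` of
cost `E|⟪s - t, X⟫| ≤ ‖s - t‖ E‖X‖`, and likewise for `Y`. Two applications of the triangle
inequality for `W₁` then move `W₁(s·X, s·Y)` to `W₁(t·X, t·Y)` at the price
`‖t - s‖ (E‖X‖ + E‖Y‖)`, in both directions. The triangle inequality itself comes from gluing
two couplings along their common marginal by disintegration. -/

open ProbabilityTheory

lemma ENNReal.abs_toReal_sub_toReal_le {a b c : ℝ≥0∞} (hb : b ≠ ∞) (hc : c ≠ ∞)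
    (hab : a ≤ b + c) (hba : b ≤ a + c) : |a.toReal - b.toReal| ≤ c.toReal := by
  have ha : a ≠ ∞ := ne_top_of_le_ne_top (add_ne_top.2 ⟨hb, hc⟩) hab
  have hab' := toReal_mono (add_ne_top.2 ⟨hb, hc⟩) hab
  have hba' := toReal_mono (add_ne_top.2 ⟨ha, hc⟩) hba
  rw [toReal_add hb hc] at hab'
  rw [toReal_add ha hc] at hba'
  exact abs_sub_le_iff.2 ⟨by linarith, by linarith⟩

theorem MeasureTheory.Measure.exists_gluing {α β γ : Type*} [MeasurableSpace α]
    [MeasurableSpace β] [MeasurableSpace γ] [StandardBorelSpace α] [Nonempty α]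
    [StandardBorelSpace γ] [Nonempty γ] (π₁ : Measure (α × β)) (π₂ : Measure (β × γ))
    [IsFiniteMeasure π₁] [IsFiniteMeasure π₂] (h : π₁.snd = π₂.fst) :
    ∃ τ : Measure (α × β × γ), τ.map (fun q ↦ (q.1, q.2.1)) = π₁ ∧ τ.map Prod.snd = π₂ := by
  -- the two conditional laws given the middle coordinate are made independent
  set κ₁ := (π₁.map Prod.swap).condKernel
  set κ₂ := π₂.condKernel
  set τ := π₂.fst ⊗ₘ (κ₁ ×ₖ κ₂)
  refine ⟨τ.map fun q ↦ (q.2.1, q.1, q.2.2), ?_, ?_⟩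
  · calc _ = (τ.map (Prod.map id Prod.fst)).map Prod.swap := by
          rw [Measure.map_map (by fun_prop) (by fun_prop),
            Measure.map_map (by fun_prop) (by fun_prop)]
          rfl
      _ = π₁ := by
          rw [← Measure.compProd_map measurable_fst, ← Kernel.fst_eq, Kernel.fst_prod, ← h,
            ← Measure.fst_map_swap, Measure.disintegrate,
            Measure.map_map measurable_swap measurable_swap, Prod.swap_swap_eq, Measure.map_id]
  · calc _ = τ.map (Prod.map id Prod.snd) := by
          rw [Measure.map_map (by fun_prop) (by fun_prop)]
          rfl
      _ = π₂ := by
          rw [← Measure.compProd_map measurable_snd, ← Kernel.snd_eq, Kernel.snd_prod,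
            Measure.disintegrate]

section W1

variable {B : Type*} [NormedAddCommGroup B] [MeasurableSpace B]

lemma W1_le_of_coupling {μ ν : Measure B} (π : Measure (B × B)) (h₁ : π.map Prod.fst = μ)
    (h₂ : π.map Prod.snd = ν) : W1 μ ν ≤ ∫⁻ p, ‖p.1 - p.2‖₊ ∂π :=
  iInf₂_le_of_le π h₁ (iInf_le _ h₂)

lemma W1_map_le {Ω : Type*} [MeasurableSpace Ω] {P : Measure Ω} {f g : Ω → B}
    (hf : AEMeasurable f P) (hg : AEMeasurable g P) :
    W1 (P.map f) (P.map g) ≤ ∫⁻ ω, ‖f ω - g ω‖₊ ∂P :=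
  (W1_le_of_coupling _ (Measure.fst_map_prodMk₀ hg) (Measure.snd_map_prodMk₀ hf)).trans
    (lintegral_map_le _ _)

lemma W1_triangle [OpensMeasurableSpace B] [MeasurableSub₂ B] [StandardBorelSpace B]
    (μ ν ρ : Measure B) [IsFiniteMeasure ν] : W1 μ ρ ≤ W1 μ ν + W1 ν ρ := by
  have hcost : Measurable fun p : B × B ↦ (‖p.1 - p.2‖₊ : ℝ≥0∞) := by fun_prop
  suffices key : ∀ π₁ : Measure (B × B), π₁.map Prod.fst = μ → π₁.map Prod.snd = ν →
      ∀ π₂ : Measure (B × B), π₂.map Prod.fst = ν → π₂.map Prod.snd = ρ →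
      W1 μ ρ ≤ ∫⁻ p, ‖p.1 - p.2‖₊ ∂π₁ + ∫⁻ p, ‖p.1 - p.2‖₊ ∂π₂ by
    conv_rhs => simp only [W1, ENNReal.iInf_add, ENNReal.add_iInf]
    simp only [le_iInf_iff]
    exact fun π₂ hν₂ hρ₂ π₁ hμ₁ hν₁ ↦ key π₁ hμ₁ hν₁ π₂ hν₂ hρ₂
  intro π₁ hμ₁ hν₁ π₂ hν₂ hρ₂
  have : IsFiniteMeasure π₁ :=
    (Measure.isFiniteMeasure_map_iff measurable_snd.aemeasurable).1 (hν₁ ▸ ‹_›)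
  have : IsFiniteMeasure π₂ :=
    (Measure.isFiniteMeasure_map_iff measurable_fst.aemeasurable).1 (hν₂ ▸ ‹_›)
  obtain ⟨τ, hτ₁, hτ₂⟩ := Measure.exists_gluing π₁ π₂ (hν₁.trans hν₂.symm)
  refine (W1_le_of_coupling (τ.map fun q ↦ (q.1, q.2.2)) ?_ ?_).trans ?_
  · rw [← hμ₁, ← hτ₁, Measure.map_map (by fun_prop) (by fun_prop),
      Measure.map_map (by fun_prop) (by fun_prop)]
    rfl
  · rw [← hρ₂, ← hτ₂, Measure.map_map (by fun_prop) (by fun_prop),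
      Measure.map_map (by fun_prop) (by fun_prop)]
    rfl
  calc _ ≤ ∫⁻ q, ‖q.1 - q.2.2‖ₑ ∂τ :=
        lintegral_map_le (fun p : B × B ↦ (‖p.1 - p.2‖₊ : ℝ≥0∞)) _
    _ ≤ ∫⁻ q, (‖q.1 - q.2.1‖ₑ + ‖q.2.1 - q.2.2‖ₑ) ∂τ := lintegral_mono fun q ↦ by
        simpa only [edist_eq_enorm_sub] using edist_triangle q.1 q.2.1 q.2.2
    _ = ∫⁻ p, ‖p.1 - p.2‖₊ ∂π₁ + ∫⁻ p, ‖p.1 - p.2‖₊ ∂π₂ := by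
        rw [lintegral_add_left (by fun_prop), ← hτ₁, ← hτ₂, lintegral_map hcost (by fun_prop),
          lintegral_map hcost (by fun_prop)]
        rfl

end W1

section Projection

variable {E Ω : Type*} [NormedAddCommGroup E] [InnerProductSpace ℝ E] [MeasurableSpace Ω]
  {P : Measure Ω}

lemma lintegral_enorm_inner_le (v : E) (X : Ω → E) :
    ∫⁻ ω, ‖⟪v, X ω⟫‖ₑ ∂P ≤ ‖v‖ₑ * ∫⁻ ω, ‖X ω‖ₑ ∂P := by
  rw [← lintegral_const_mul' _ _ enorm_ne_top]
  exact lintegral_mono fun ω ↦ by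
    simpa only [enorm_eq_nnnorm, ← coe_mul, coe_le_coe] using nnnorm_inner_le_nnnorm v (X ω)

variable [MeasurableSpace E] [OpensMeasurableSpace E] {X Y : Ω → E}

lemma W1_map_inner_le (hXm : AEMeasurable X P) (s t : E) :
    W1 (P.map fun ω ↦ ⟪s, X ω⟫) (P.map fun ω ↦ ⟪t, X ω⟫) ≤ ‖s - t‖ₑ * ∫⁻ ω, ‖X ω‖ₑ ∂P :=
  calc _ ≤ ∫⁻ ω, ‖⟪s, X ω⟫ - ⟪t, X ω⟫‖ₑ ∂P := W1_map_le (by fun_prop) (by fun_prop)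
    _ = ∫⁻ ω, ‖⟪s - t, X ω⟫‖ₑ ∂P := by simp_rw [inner_sub_left]
    _ ≤ _ := lintegral_enorm_inner_le _ _

lemma W1_map_inner_ne_top (hXm : AEMeasurable X P) (hYm : AEMeasurable Y P)
    (hX : ∫⁻ ω, ‖X ω‖ₑ ∂P ≠ ∞) (hY : ∫⁻ ω, ‖Y ω‖ₑ ∂P ≠ ∞) (t : E) :
    W1 (P.map fun ω ↦ ⟪t, X ω⟫) (P.map fun ω ↦ ⟪t, Y ω⟫) ≠ ∞ := by
  refine ((W1_map_le (by fun_prop) (by fun_prop)).trans_lt ?_).ne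
  calc ∫⁻ ω, ‖⟪t, X ω⟫ - ⟪t, Y ω⟫‖ₑ ∂P ≤ ∫⁻ ω, (‖⟪t, X ω⟫‖ₑ + ‖⟪t, Y ω⟫‖ₑ) ∂P :=
        lintegral_mono fun ω ↦ enorm_sub_le
    _ = ∫⁻ ω, ‖⟪t, X ω⟫‖ₑ ∂P + ∫⁻ ω, ‖⟪t, Y ω⟫‖ₑ ∂P := lintegral_add_left' (by fun_prop) _
    _ ≤ ‖t‖ₑ * ∫⁻ ω, ‖X ω‖ₑ ∂P + ‖t‖ₑ * ∫⁻ ω, ‖Y ω‖ₑ ∂P :=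
        add_le_add (lintegral_enorm_inner_le _ _) (lintegral_enorm_inner_le _ _)
    _ < ∞ := by finiteness

lemma W1_map_inner_le_add [IsFiniteMeasure P] (hXm : AEMeasurable X P)
    (hYm : AEMeasurable Y P) (s t : E) :
    W1 (P.map fun ω ↦ ⟪s, X ω⟫) (P.map fun ω ↦ ⟪s, Y ω⟫) ≤
      W1 (P.map fun ω ↦ ⟪t, X ω⟫) (P.map fun ω ↦ ⟪t, Y ω⟫) +
        ‖s - t‖ₑ * (∫⁻ ω, ‖X ω‖ₑ ∂P + ∫⁻ ω, ‖Y ω‖ₑ ∂P) :=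
  calc _ ≤ W1 (P.map fun ω ↦ ⟪s, X ω⟫) (P.map fun ω ↦ ⟪t, X ω⟫) +
        (W1 (P.map fun ω ↦ ⟪t, X ω⟫) (P.map fun ω ↦ ⟪t, Y ω⟫) +
          W1 (P.map fun ω ↦ ⟪t, Y ω⟫) (P.map fun ω ↦ ⟪s, Y ω⟫)) :=
        (W1_triangle _ _ _).trans (add_le_add le_rfl (W1_triangle _ _ _))
    _ ≤ ‖s - t‖ₑ * ∫⁻ ω, ‖X ω‖ₑ ∂P +
        (W1 (P.map fun ω ↦ ⟪t, X ω⟫) (P.map fun ω ↦ ⟪t, Y ω⟫) +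
          ‖t - s‖ₑ * ∫⁻ ω, ‖Y ω‖ₑ ∂P) := by
        gcongr
        · exact W1_map_inner_le hXm s t
        · exact W1_map_inner_le hYm t s
    _ = _ := by rw [enorm_sub_rev t s]; ring

end Projection

theorem sliced_W1_lipschitz_in_direction_general {d : ℕ}
    {Ω : Type*} [MeasurableSpace Ω] (P : Measure Ω) [IsProbabilityMeasure P]
    (X Y : Ω → EuclideanSpace ℝ (Fin d))
    (hXm : AEMeasurable X P) (hYm : AEMeasurable Y P)
    (hX : Integrable (fun ω => ‖X ω‖) P) (hY : Integrable (fun ω => ‖Y ω‖) P)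
    (s t : EuclideanSpace ℝ (Fin d)) :
    |(W1 (P.map fun ω => ⟪s, X ω⟫) (P.map fun ω => ⟪s, Y ω⟫)).toReal -
      (W1 (P.map fun ω => ⟪t, X ω⟫) (P.map fun ω => ⟪t, Y ω⟫)).toReal| ≤
    ‖t - s‖ * ((∫ ω, ‖X ω‖ ∂P) + ∫ ω, ‖Y ω‖ ∂P) := by
  have lintegral_enorm_eq {Z : Ω → EuclideanSpace ℝ (Fin d)}
      (hZ : Integrable (fun ω => ‖Z ω‖) P) :
      ∫⁻ ω, ‖Z ω‖ₑ ∂P = ENNReal.ofReal (∫ ω, ‖Z ω‖ ∂P) := by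
    simpa only [ofReal_norm] using
      (ofReal_integral_eq_lintegral_ofReal hZ (ae_of_all _ fun ω ↦ norm_nonneg (Z ω))).symm
  have hc : ‖s - t‖ₑ * (∫⁻ ω, ‖X ω‖ₑ ∂P + ∫⁻ ω, ‖Y ω‖ₑ ∂P) =
      ENNReal.ofReal (‖t - s‖ * ((∫ ω, ‖X ω‖ ∂P) + ∫ ω, ‖Y ω‖ ∂P)) := by
    rw [lintegral_enorm_eq hX, lintegral_enorm_eq hY,
      ← ofReal_add (by positivity) (by positivity), ← ofReal_norm, norm_sub_rev,
      ← ofReal_mul (norm_nonneg _)]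
  have hst := W1_map_inner_le_add hXm hYm s t
  have hts := W1_map_inner_le_add hXm hYm t s
  rw [hc] at hst
  rw [enorm_sub_rev, hc] at hts
  refine (ENNReal.abs_toReal_sub_toReal_le ?_ ofReal_ne_top hst hts).trans_eq
    (toReal_ofReal (by positivity))
  exact W1_map_inner_ne_top hXm hYm (by simp [lintegral_enorm_eq hX])
    (by simp [lintegral_enorm_eq hY]) t

/-- Lipschitz continuity of the sliced 1-Wasserstein distance in the projection
direction. -/
theorem sliced_W1_lipschitz_in_direction {d : ℕ}
    {Ω : Type*} [MeasurableSpace Ω] (P : Measure Ω) [IsProbabilityMeasure P]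
    (X Y : Ω → EuclideanSpace ℝ (Fin d))
    (hXm : AEMeasurable X P) (hYm : AEMeasurable Y P)
    (hX : Integrable (fun ω => ‖X ω‖) P) (hY : Integrable (fun ω => ‖Y ω‖) P)
    (s t : EuclideanSpace ℝ (Fin d)) (hs : ‖s‖ = 1) (ht : ‖t‖ = 1) :
    |(W1 (P.map fun ω => ⟪s, X ω⟫) (P.map fun ω => ⟪s, Y ω⟫)).toReal -
      (W1 (P.map fun ω => ⟪t, X ω⟫) (P.map fun ω => ⟪t, Y ω⟫)).toReal| ≤
    ‖t - s‖ * ((∫ ω, ‖X ω‖ ∂P) + ∫ ω, ‖Y ω‖ ∂P) :=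
  sliced_W1_lipschitz_in_direction_general P X Y hXm hYm hX hY s t
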